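/- Let g_0, g_1 : 𝔽_{p^m} × 𝔽_{p^m} → 𝔽_p be the Maiorana–McFarland bent functions g_0(y₁,y₂) = Tr(y₁ π(y₂)) and g_1 = g_0 + h₁ ∘ pr₂ for a permutation π of 𝔽_{p^m} and arbitrary h₁ : 𝔽_{p^m} → 𝔽_p. Then for every j ∈ 𝔽_p, the combination G_j = (1−j) g_0 + j g_1 = g_0 + j·h₁∘pr₂ is bent, its dual satisfies G_j* = (1−j) g_0* + j g_1*, and W_{G_j}(b) = p^m ζ_p^{G_j*(b)} for all b (regular with constant sign independent of j). -/

import Mathlib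

/-- The complex primitive `m`-th root of unity `e^{2πi/m}`. -/
noncomputable def zeta (m : ℕ) : ℂ := Complex.exp (2 * Real.pi * Complex.I / m)

/-- Walsh transform of a p-ary function on `F × F`, `F` a finite field of characteristic `p`,
with inner product given by the absolute trace. -/
noncomputable def walshFp (p : ℕ) (F : Type) [Field F] [Fintype F] [Algebra (ZMod p) F]
    (g : F × F → ZMod p) (a : F × F) : ℂ :=
  ∑ y : F × F, zeta p ^
    ((g y - Algebra.trace (ZMod p) F (a.1 * y.1) - Algebra.trace (ZMod p) F (a.2 * y.2)).val)

theorem stmt14 (p m : ℕ) [Fact (Nat.Prime p)] (hm : 1 ≤ m)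
    (F : Type) [Field F] [Fintype F] [Algebra (ZMod p) F]
    (hcard : Fintype.card F = p ^ m)
    (π : Equiv.Perm F) (h1 : F → ZMod p)
    (g0 g1 : F × F → ZMod p)
    (hg0 : ∀ y : F × F, g0 y = Algebra.trace (ZMod p) F (y.1 * π y.2))
    (hg1 : ∀ y : F × F, g1 y = g0 y + h1 y.2) :
    ∀ (j : ZMod p) (a : F × F),
      walshFp p F (fun y => (1 - j) * g0 y + j * g1 y) a = (p : ℂ) ^ (m : ℕ) *
        zeta p ^
          (((1 - j) * (-(Algebra.trace (ZMod p) F (a.2 * π.symm a.1))) +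
            j * (-(Algebra.trace (ZMod p) F (a.2 * π.symm a.1)) + h1 (π.symm a.1))).val) := by
  intro j a
  classical
  have hp : p.Prime := Fact.out
  haveI : NeZero p := ⟨hp.ne_zero⟩
  have hζ : IsPrimitiveRoot (zeta p) p := by
    simpa [zeta] using Complex.isPrimitiveRoot_exp p hp.ne_zero
  have hζ1 : (zeta p) ^ p = 1 := hζ.pow_eq_one
  set Tr : F →ₗ[ZMod p] ZMod p := Algebra.trace (ZMod p) F with hTr
  set ψ₀ : AddChar (ZMod p) ℂ := AddChar.zmodChar p hζ1 with hψ₀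
  set ψ : AddChar F ℂ := ψ₀.compAddMonoidHom Tr.toAddMonoidHom with hψ
  have hval : ∀ x : ZMod p, zeta p ^ x.val = ψ₀ x := fun x =>
    (AddChar.zmodChar_apply hζ1 x).symm
  haveI : FiniteDimensional (ZMod p) F := Module.Finite.of_finite
  haveI : Algebra.IsSeparable (ZMod p) F := inferInstance
  obtain ⟨x0, hx0⟩ := Algebra.trace_surjective (ZMod p) F 1
  have hψprim : ψ.IsPrimitive := by
    refine AddChar.IsPrimitive.of_ne_one (AddChar.ne_one_iff.2 ⟨x0, ?_⟩)
    have : ψ x0 = zeta p ^ (1 : ZMod p).val := by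
      simp [hψ, hψ₀, AddChar.zmodChar_apply, hx0, hTr]
    rw [this, ZMod.val_one]
    simpa using hζ.pow_ne_one_of_pos_of_lt one_ne_zero hp.one_lt
  have hE : ∀ y₁ y₂ : F,
      ((1 - j) * (Tr (y₁ * π y₂)) + j * (Tr (y₁ * π y₂) + h1 y₂)
        - Tr (a.1 * y₁) - Tr (a.2 * y₂))
      = Tr (y₁ * (π y₂ - a.1)) + (j * h1 y₂ - Tr (a.2 * y₂)) := by
    intro y₁ y₂
    rw [mul_sub, map_sub, mul_comm y₁ a.1]
    ring
  unfold walshFp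
  simp only [hg1, hg0]
  rw [Fintype.sum_prod_type_right]
  have step1 : ∀ y₂ : F,
      (∑ y₁ : F, zeta p ^ (((1 - j) * (Tr ((y₁, y₂).1 * π (y₁, y₂).2)) +
          j * (Tr ((y₁, y₂).1 * π (y₁, y₂).2) + h1 (y₁, y₂).2)
          - Tr (a.1 * (y₁, y₂).1) - Tr (a.2 * (y₁, y₂).2)).val))
      = ψ₀ (j * h1 y₂ - Tr (a.2 * y₂)) *
          (if y₂ = π.symm a.1 then (Fintype.card F : ℂ) else 0) := by
    intro y₂
    have : ∀ y₁ : F, zeta p ^ (((1 - j) * (Tr (y₁ * π y₂)) +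
          j * (Tr (y₁ * π y₂) + h1 y₂) - Tr (a.1 * y₁) - Tr (a.2 * y₂)).val)
        = ψ₀ (j * h1 y₂ - Tr (a.2 * y₂)) * ψ (y₁ * (π y₂ - a.1)) := by
      intro y₁
      rw [hval, hE, AddChar.map_add_eq_mul, mul_comm]
      rfl
    simp only [this, ← Finset.mul_sum]
    congr 1
    rw [AddChar.sum_mulShift _ hψprim]
    have : π y₂ - a.1 = 0 ↔ y₂ = π.symm a.1 := by
      rw [sub_eq_zero, ← Equiv.eq_symm_apply]
    simp only [this]
    split_ifs <;> simp
  simp only [← hTr]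
  simp only [step1]
  rw [Finset.sum_eq_single (π.symm a.1)]
  · rw [if_pos rfl, hcard, hval]
    have hc : (j * h1 (π.symm a.1) - Tr (a.2 * π.symm a.1))
        = ((1 - j) * (-(Tr (a.2 * π.symm a.1))) +
            j * (-(Tr (a.2 * π.symm a.1)) + h1 (π.symm a.1))) := by ring
    rw [hc]
    push_cast
    ring
  · intro b _ hb
    rw [if_neg hb, mul_zero]
  · intro h; exact absurd (Finset.mem_univ _) h
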